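/- Let R be a right Σ-V ring. Then the following are equivalent: (1) every iso-simple right R-module is injective; (2) every iso-artinian right R-module is injective and semisimple. -/

import Mathlib

universe u

open MulOpposite

/-- A right `A`-module `M` is Σ-injective if the direct sum of any family of copies of `M`
is injective. -/
def IsSigmaInjective (A : Type u) [Ring A] (M : Type u) [AddCommGroup M] [Module A M] : Prop :=
  ∀ ι : Type u, Module.Injective A (ι →₀ M)

/-- `R` is a right Σ-V ring: every simple right `R`-module is Σ-injective.
Right `R`-modules are modules over `Rᵐᵒᵖ`. -/
def IsRightSigmaVRing (R : Type u) [Ring R] : Prop :=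
  ∀ (S : Type u) [AddCommGroup S] [Module Rᵐᵒᵖ S],
    IsSimpleModule Rᵐᵒᵖ S → IsSigmaInjective Rᵐᵒᵖ S

/-- A nonzero module is iso-simple if it is isomorphic to each of its nonzero submodules. -/
def IsIsoSimpleModule (A : Type u) [Ring A] (M : Type u) [AddCommGroup M] [Module A M] : Prop :=
  Nontrivial M ∧ ∀ N : Submodule A M, N ≠ ⊥ → Nonempty (M ≃ₗ[A] N)

/-- A module `M` is iso-artinian if for every descending chain `M₁ ≥ M₂ ≥ ⋯` of submodules
of `M` there exists `n` such that `Mₙ ≅ Mᵢ` for all `i ≥ n`. -/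
def IsIsoArtinian (A : Type u) [Ring A] (M : Type u) [AddCommGroup M] [Module A M] : Prop :=
  ∀ f : ℕ → Submodule A M, (∀ n, f (n + 1) ≤ f n) →
    ∃ n, ∀ i, n ≤ i → Nonempty ((f n) ≃ₗ[A] (f i))

/-! An injective iso-simple module is simple: each nonzero submodule is isomorphic to it, hence
injective, hence a direct summand, so the module is semisimple and isomorphic to any of its simple
submodules. Every nonzero submodule of an iso-artinian module `M` contains an iso-simple one, so
under (1) it contains a simple submodule, i.e. the socle of `M` is essential. The iso-artinian condition leaves only
finitely many isotypic components in `M`, and each of them is a direct sum of copies of one simple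
module, hence injective by Σ-injectivity. So the socle is injective, hence a direct summand, and
being essential it is all of `M`. Conversely, iso-simple modules are iso-artinian. -/

variable {A : Type u} [Ring A] {M N : Type u} [AddCommGroup M] [Module A M]
  [AddCommGroup N] [Module A N]

theorem Module.Injective.of_linearEquiv (e : M ≃ₗ[A] N) [Module.Injective A M] :
    Module.Injective A N :=
  ((Module.Baer.of_injective ‹_›).of_equiv e).injective

theorem Module.Injective.of_isInternal {ι : Type u} [Finite ι] [DecidableEq ι]
    {p : ι → Submodule A M} (hp : DirectSum.IsInternal p) [∀ i, Module.Injective A (p i)] :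
    Module.Injective A M :=
  have := Fintype.ofFinite ι
  .of_linearEquiv ((DFinsupp.linearEquivFunOnFintype (R := A) (M := fun i => p i)).symm ≪≫ₗ
    LinearEquiv.ofBijective (DirectSum.coeLinearMap p) hp)

theorem Submodule.exists_isCompl_of_injective (p : Submodule A M) [Module.Injective A p] :
    ∃ q, IsCompl p q :=
  have ⟨_, hr⟩ := Module.Injective.out p.subtype p.injective_subtype LinearMap.id
  ⟨_, LinearMap.isCompl_of_proj hr⟩

theorem Submodule.exists_le_linearEquiv_of_le {p p' s : Submodule A M} (e : p ≃ₗ[A] p')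
    (hs : s ≤ p) : ∃ s' ≤ p', Nonempty (s ≃ₗ[A] s') :=
  ⟨((s.comap p.subtype).map e.toLinearMap).map p'.subtype, map_subtype_le _ _,
    ⟨(comapSubtypeEquivOfLe hs).symm ≪≫ₗ equivMapOfInjective _ e.injective _ ≪≫ₗ
      equivMapOfInjective _ p'.injective_subtype _⟩⟩

theorem IsIsotypic.injective [IsSemisimpleModule A M] [Nontrivial M] (hM : IsIsotypic A M)
    (hA : ∀ S : Submodule A M, IsSimpleModule A S → IsSigmaInjective A S) :
    Module.Injective A M :=
  have ⟨ι, _, S, hS, ⟨e⟩⟩ := hM.linearEquiv_finsupp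
  have := hA S hS ι
  .of_linearEquiv e.symm

theorem IsIsoSimpleModule.isSimpleModule [Module.Injective A M] (hM : IsIsoSimpleModule A M) :
    IsSimpleModule A M := by
  obtain ⟨_, hiso⟩ := hM
  have : IsSemisimpleModule A M := by
    refine { exists_isCompl := fun p => ?_ }
    rcases eq_or_ne p ⊥ with rfl | hp
    · exact ⟨⊤, isCompl_bot_top⟩
    · obtain ⟨e⟩ := hiso p hp
      have := Module.Injective.of_linearEquiv e
      exact p.exists_isCompl_of_injective
  obtain ⟨S, hS⟩ := IsSemisimpleModule.exists_simple_submodule A M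
  obtain ⟨e⟩ := hiso S (isSimpleModule_iff_isAtom.mp hS).ne_bot
  exact .congr e

theorem IsIsoSimpleModule.isIsoArtinian (hM : IsIsoSimpleModule A M) : IsIsoArtinian A M := by
  intro p hp
  by_cases h : ∃ n, p n = ⊥
  · obtain ⟨n, hn⟩ := h
    refine ⟨n, fun i hi => ?_⟩
    have hi : p i = ⊥ := le_bot_iff.mp (hn ▸ antitone_nat_of_succ_le hp hi)
    rw [hn, hi]
    exact ⟨.refl _ _⟩
  · simp only [not_exists] at h
    exact ⟨0, fun i _ => ⟨(hM.2 _ (h 0)).some.symm ≪≫ₗ (hM.2 _ (h i)).some⟩⟩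

theorem isIsoSimpleModule_of_forall_le {K : Submodule A M} (hK : K ≠ ⊥)
    (h : ∀ L ≤ K, L ≠ ⊥ → Nonempty (K ≃ₗ[A] L)) : IsIsoSimpleModule A K := by
  refine ⟨Submodule.nontrivial_iff_ne_bot.mpr hK, fun L hL => ?_⟩
  have hL' : L.map K.subtype ≠ ⊥ := by
    rwa [ne_eq, ← Submodule.map_bot K.subtype,
      (Submodule.map_injective_of_injective K.injective_subtype).eq_iff]
  obtain ⟨e⟩ := h _ (K.map_subtype_le L) hL'
  exact ⟨e ≪≫ₗ (L.equivMapOfInjective _ K.injective_subtype).symm⟩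

namespace IsIsoArtinian

theorem of_injective (hM : IsIsoArtinian A M) (f : N →ₗ[A] M) (hf : Function.Injective f) :
    IsIsoArtinian A N := by
  intro p hp
  obtain ⟨n, hn⟩ := hM (fun n => (p n).map f) fun n => Submodule.map_mono (hp n)
  refine ⟨n, fun i hi => ?_⟩
  obtain ⟨e⟩ := hn i hi
  exact ⟨(p n).equivMapOfInjective f hf ≪≫ₗ e ≪≫ₗ ((p i).equivMapOfInjective f hf).symm⟩

theorem exists_isIsoSimpleModule_le (hM : IsIsoArtinian A M) {N : Submodule A M} (hN : N ≠ ⊥) :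
    ∃ K ≤ N, IsIsoSimpleModule A K := by
  by_contra! hno
  have step : ∀ K : {K : Submodule A M // K ≤ N ∧ K ≠ ⊥},
      ∃ L : {K : Submodule A M // K ≤ N ∧ K ≠ ⊥}, L.1 ≤ K.1 ∧ ¬Nonempty (K.1 ≃ₗ[A] L.1) := by
    rintro ⟨K, hKN, hK⟩
    obtain ⟨L, hLK, hL, hKL⟩ : ∃ L ≤ K, L ≠ ⊥ ∧ ¬Nonempty (K ≃ₗ[A] L) := by
      by_contra! h
      exact hno K hKN (isIsoSimpleModule_of_forall_le hK h)
    exact ⟨⟨L, hLK.trans hKN, hL⟩, hLK, hKL⟩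
  choose g hg using step
  let K₀ : {K : Submodule A M // K ≤ N ∧ K ≠ ⊥} := ⟨N, le_rfl, hN⟩
  have hchain (n : ℕ) : (g^[n + 1] K₀).1 ≤ (g^[n] K₀).1 := by
    rw [Function.iterate_succ_apply']
    exact (hg _).1
  obtain ⟨n, hn⟩ := hM (fun n => (g^[n] K₀).1) hchain
  have hiso := hn (n + 1) n.le_succ
  rw [Function.iterate_succ_apply'] at hiso
  exact (hg _).2 hiso

/-- In the chain `c n ⊔ c (n + 1) ⊔ ⋯` of distinct isotypic components, the simple modules
of type `c n` disappear at step `n + 1`, so consecutive terms are never isomorphic. -/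
theorem finite_isotypicComponents (hM : IsIsoArtinian A M) : Finite (isotypicComponents A M) := by
  by_contra! hinf
  let c := Infinite.natEmbedding (isotypicComponents A M)
  let tail (n : ℕ) : Set (Submodule A M) := (fun m => (c m : Submodule A M)) '' Set.Ici n
  have : ∀ n, ∀ m : tail n, IsSemisimpleModule A m := by
    rintro n ⟨_, m, _, rfl⟩
    infer_instance
  obtain ⟨n, hn⟩ := hM (fun n => sSup (tail n))
    fun n => sSup_le_sSup (Set.image_mono (Set.Ici_subset_Ici.mpr n.le_succ))
  obtain ⟨e⟩ := hn (n + 1) n.le_succ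
  obtain ⟨S, hS, hcn⟩ := (c n).2
  obtain ⟨S', hS'le, ⟨eS⟩⟩ := Submodule.exists_le_linearEquiv_of_le e
    (S.le_isotypicComponent.trans (hcn ▸ le_sSup ⟨n, Set.mem_Ici.mpr le_rfl, rfl⟩))
  have := IsSimpleModule.congr eS.symm
  obtain ⟨_, ⟨m, hm, rfl⟩, T, hT, ⟨eT⟩⟩ := S'.le_linearEquiv_of_le_sSup _ hS'le
  have := IsSimpleModule.congr eT.symm
  have hcm : (c m : Submodule A M) = c n := by
    rw [eq_isotypicComponent_of_le (c m).2 hT, hcn, (eS ≪≫ₗ eT).symm.isotypicComponent_eq]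
  have := c.injective (Subtype.ext hcm)
  have := Set.mem_Ici.mp hm
  omega

end IsIsoArtinian

theorem injective_of_isSemisimpleModule_of_isIsoArtinian [IsSemisimpleModule A M]
    (hA : ∀ (S : Type u) [AddCommGroup S] [Module A S], IsSimpleModule A S → IsSigmaInjective A S)
    (hM : IsIsoArtinian A M) : Module.Injective A M := by
  classical
  have := hM.finite_isotypicComponents
  have (c : isotypicComponents A M) : Module.Injective A c :=
    (IsIsotypic.isotypicComponents c.2).injective fun S hS => hA S hS
  exact .of_isInternal (p := fun c : isotypicComponents A M => (c : Submodule A M))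
    (DirectSum.isInternal_submodule_of_iSupIndep_of_iSup_eq_top
      ((sSupIndep_iff _).mp (sSupIndep_isotypicComponents A M))
      (by rw [← sSup_eq_iSup', sSup_isotypicComponents]))

theorem IsIsoArtinian.injective_and_isSemisimpleModule
    (hA : ∀ (S : Type u) [AddCommGroup S] [Module A S], IsSimpleModule A S → IsSigmaInjective A S)
    (hM : IsIsoArtinian A M) (hsimple : ∀ p : Submodule A M, p ≠ ⊥ → ∃ K ≤ p, IsSimpleModule A K) :
    Module.Injective A M ∧ IsSemisimpleModule A M := by
  let simples := {m : Submodule A M | IsSimpleModule A m}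
  let soc := ⨆ m ∈ simples, m
  have hsimples : ∀ m ∈ simples, IsSemisimpleModule A m :=
    fun m hm => have : IsSimpleModule A m := hm; inferInstance
  have : IsSemisimpleModule A soc := isSemisimpleModule_biSup_of_isSemisimpleModule_submodule hsimples
  have : Module.Injective A soc := injective_of_isSemisimpleModule_of_isIsoArtinian hA
    (hM.of_injective soc.subtype soc.injective_subtype)
  obtain ⟨q, hq⟩ := soc.exists_isCompl_of_injective
  have hq_bot : q = ⊥ := by
    by_contra hq0
    obtain ⟨K, hKq, hK⟩ := hsimple q hq0
    exact (isSimpleModule_iff_isAtom.mp hK).ne_bot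
      ((hq.disjoint.mono_left (le_biSup (fun m => m) (show K ∈ simples from hK))).eq_bot_of_le hKq)
  have hsoc : soc = ⊤ := by simpa [hq_bot] using hq.sup_eq_top
  exact ⟨.of_linearEquiv (LinearEquiv.ofTop soc hsoc),
    isSemisimpleModule_of_isSemisimpleModule_submodule hsimples hsoc⟩

/-- For a right Σ-V ring `R` the following are equivalent:
(1) every iso-simple right `R`-module is injective;
(2) every iso-artinian right `R`-module is injective and semisimple. -/
theorem isoSimple_injective_iff_isoArtinian_injective_semisimple
    (R : Type u) [Ring R] (hR : IsRightSigmaVRing R) :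
    (∀ (M : Type u) [AddCommGroup M] [Module Rᵐᵒᵖ M],
        IsIsoSimpleModule Rᵐᵒᵖ M → Module.Injective Rᵐᵒᵖ M) ↔
      (∀ (M : Type u) [AddCommGroup M] [Module Rᵐᵒᵖ M],
        IsIsoArtinian Rᵐᵒᵖ M → Module.Injective Rᵐᵒᵖ M ∧ IsSemisimpleModule Rᵐᵒᵖ M) := by
  constructor
  · intro hinj M _ _ hM
    refine hM.injective_and_isSemisimpleModule hR fun p hp => ?_
    obtain ⟨K, hKp, hK⟩ := hM.exists_isIsoSimpleModule_le hp
    have := hinj K hK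
    exact ⟨K, hKp, hK.isSimpleModule⟩
  · intro h M _ _ hM
    exact (h M hM.isIsoArtinian).1
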